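/- arXiv:2501.12820 — 5 statements merged into one kernel-verified Lean document; each statement's English description precedes it below -/
import Mathlib

section
/- There is no positive integer θ such that (4θ² + 9θ + 4)/θ is the square of a rational number. -/
lemma sq_split {a b c : ℕ} (hab : Nat.Coprime a b) (h : a * b = c ^ 2) :
    (∃ d, a = d ^ 2) ∧ (∃ e, b = e ^ 2) := by
  constructor
  · exact exists_eq_pow_of_mul_eq_pow (Nat.isUnit_iff.2 hab) h
  · exact exists_eq_pow_of_mul_eq_pow (Nat.isUnit_iff.2 hab.symm) (by rw [mul_comm] at h; exact h)

lemma no_sq (θ : ℕ) (hθ : 0 < θ) (s : ℕ) (hs : s ^ 2 = θ * (4 * θ ^ 2 + 9 * θ + 4)) : False := by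
  rcases Nat.even_or_odd θ with he | ho
  · -- θ even
    obtain ⟨u, rfl⟩ := he
    have hu : 0 < u := by omega
    -- s^2 = 4 * (u * (8u^2+9u+2))
    have h4 : s ^ 2 = 4 * (u * (8 * u ^ 2 + 9 * u + 2)) := by ring_nf; ring_nf at hs; linarith
    have h2s : 2 ∣ s := by
      have : (2 : ℕ).Prime := Nat.prime_two
      refine this.dvd_of_dvd_pow (n := 2) ?_
      exact ⟨2 * (u * (8 * u ^ 2 + 9 * u + 2)), by linarith⟩
    obtain ⟨t, rfl⟩ := h2s
    have ht : t ^ 2 = u * (8 * u ^ 2 + 9 * u + 2) := by nlinarith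
    rcases Nat.even_or_odd u with hue | huo
    · -- u even, θ = 4v
      obtain ⟨v, rfl⟩ := hue
      have hv : 0 < v := by omega
      have h4' : t ^ 2 = 4 * (v * (16 * v ^ 2 + 9 * v + 1)) := by ring_nf; ring_nf at ht; linarith
      have h2t : 2 ∣ t := by
        refine Nat.prime_two.dvd_of_dvd_pow (n := 2) ?_
        exact ⟨2 * (v * (16 * v ^ 2 + 9 * v + 1)), by linarith⟩
      obtain ⟨w, rfl⟩ := h2t
      have hw : w ^ 2 = v * (16 * v ^ 2 + 9 * v + 1) := by nlinarith
      have hcop : Nat.Coprime v (16 * v ^ 2 + 9 * v + 1) := by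
        have h := (Nat.coprime_add_mul_left_right v 1 (16 * v + 9)).2 (Nat.coprime_one_right v)
        have e : 16 * v ^ 2 + 9 * v + 1 = 1 + v * (16 * v + 9) := by ring
        rw [e]; exact h
      obtain ⟨-, b, hb⟩ := sq_split hcop hw.symm
      -- 16v²+9v+1 strictly between (4v+1)² and (4v+2)²
      have h1 : (4 * v + 1) ^ 2 < b ^ 2 := by nlinarith
      have h2 : b ^ 2 < (4 * v + 2) ^ 2 := by nlinarith
      have l1 : 4 * v + 1 < b := by
        exact lt_of_pow_lt_pow_left₀ 2 (Nat.zero_le _) h1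
      have l2 : b < 4 * v + 2 := by
        exact lt_of_pow_lt_pow_left₀ 2 (Nat.zero_le _) h2
      omega
    · -- u odd
      have hcop2 : Nat.Coprime u 2 := Nat.coprime_two_right.2 huo
      have hcop : Nat.Coprime u (8 * u ^ 2 + 9 * u + 2) := by
        have h := (Nat.coprime_add_mul_left_right u 2 (8 * u + 9)).2 hcop2
        have e : 8 * u ^ 2 + 9 * u + 2 = 2 + u * (8 * u + 9) := by ring
        rw [e]; exact h
      obtain ⟨⟨a, ha⟩, b, hb⟩ := sq_split hcop ht.symm
      -- mod 8: b² = 8a⁴+9a²+2 ≡ a²+2, impossible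
      have hz : ((b : ZMod 8)) ^ 2 = (a : ZMod 8) ^ 2 + 2 := by
        have : (b : ℕ) ^ 2 = 8 * (a ^ 2) ^ 2 + 9 * a ^ 2 + 2 := by
          rw [← hb, ← ha]
        have := congrArg (Nat.cast : ℕ → ZMod 8) this
        push_cast at this
        rw [this]
        have h8 : (8 : ZMod 8) = 0 := rfl
        have h9 : (9 : ZMod 8) = 1 := rfl
        rw [h8, h9]; ring
      revert hz
      have : ∀ x y : ZMod 8, ¬ y ^ 2 = x ^ 2 + 2 := by decide
      exact this a b
  · -- θ odd
    have hcop4 : Nat.Coprime θ 4 := by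
      have h2 : Nat.Coprime θ 2 := Nat.coprime_two_right.2 ho
      have : (4 : ℕ) = 2 * 2 := rfl
      rw [this]
      exact Nat.Coprime.mul_right h2 h2
    have hcop : Nat.Coprime θ (4 * θ ^ 2 + 9 * θ + 4) := by
      have h := (Nat.coprime_add_mul_left_right θ 4 (4 * θ + 9)).2 hcop4
      have e : 4 * θ ^ 2 + 9 * θ + 4 = 4 + θ * (4 * θ + 9) := by ring
      rw [e]; exact h
    obtain ⟨-, b, hb⟩ := sq_split hcop hs.symm
    have h1 : (2 * θ + 2) ^ 2 < b ^ 2 := by nlinarith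
    have h2 : b ^ 2 < (2 * θ + 3) ^ 2 := by nlinarith
    have l1 : 2 * θ + 2 < b := lt_of_pow_lt_pow_left₀ 2 (Nat.zero_le _) h1
    have l2 : b < 2 * θ + 3 := lt_of_pow_lt_pow_left₀ 2 (Nat.zero_le _) h2
    omega

theorem stmt6 : ¬ ∃ (θ : ℕ) (r : ℚ), 0 < θ ∧
    ((4 * (θ : ℚ) ^ 2 + 9 * θ + 4) / θ) = r ^ 2 := by
  rintro ⟨θ, r, hθ, h⟩
  have hθQ : (θ : ℚ) ≠ 0 := by exact_mod_cast hθ.ne'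
  have key : ((θ * (4 * θ ^ 2 + 9 * θ + 4) : ℕ) : ℚ) = (r * θ) ^ 2 := by
    push_cast
    field_simp at h
    nlinarith [h]
  have hsq : IsSquare ((θ * (4 * θ ^ 2 + 9 * θ + 4) : ℕ) : ℚ) := ⟨r * θ, by rw [key]; ring⟩
  rw [Rat.isSquare_natCast_iff] at hsq
  obtain ⟨s, hs⟩ := hsq
  exact no_sq θ hθ s (by rw [pow_two, ← hs])
end

section
/- Let θ be a positive integer and set t = (θ² + 1)/θ (a rational number). Then √(4t + 9) is irrational. -/
-- a natural strictly between two consecutive squares is not a square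
lemma aux_sq_split {a b : ℕ} (h : Nat.Coprime a b) (hsq : IsSquare (a * b)) :
    IsSquare a ∧ IsSquare b := by
  obtain ⟨k, hk⟩ := hsq
  have hab : a * b = k ^ 2 := by rw [hk]; ring
  have h1 : IsUnit (gcd a b) := by
    rw [Nat.isUnit_iff]
    exact h
  obtain ⟨d, hd⟩ := exists_eq_pow_of_mul_eq_pow h1 hab
  have hba : b * a = k ^ 2 := by rw [mul_comm]; exact hab
  have h2 : IsUnit (gcd b a) := by
    rw [Nat.isUnit_iff]
    exact h.symm
  obtain ⟨e, he⟩ := exists_eq_pow_of_mul_eq_pow h2 hba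
  exact ⟨⟨d, by rw [hd]; ring⟩, ⟨e, by rw [he]; ring⟩⟩

lemma aux_key (θ : ℕ) (hθ : 0 < θ) : ¬ IsSquare (θ * (4 * θ ^ 2 + 9 * θ + 4)) := by
  intro hsq
  rcases Nat.even_or_odd θ with he | ho
  · -- θ even
    obtain ⟨u, rfl⟩ : ∃ u, θ = 2 * u := by obtain ⟨u, hu⟩ := he; exact ⟨u, by omega⟩
    rcases Nat.even_or_odd u with hue | huo
    · -- θ = 4 w
      obtain ⟨w, rfl⟩ : ∃ w, u = 2 * w := by obtain ⟨w, hw⟩ := hue; exact ⟨w, by omega⟩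
      have hw : 0 < w := by omega
      have h16 : (2 * (2 * w)) * (4 * (2 * (2 * w)) ^ 2 + 9 * (2 * (2 * w)) + 4)
          = 16 * (w * (16 * w ^ 2 + 9 * w + 1)) := by ring
      rw [h16] at hsq
      obtain ⟨k, hk⟩ := hsq
      have h4 : (4 : ℕ) ∣ k := by
        have : (4 : ℕ) ^ 2 ∣ k ^ 2 := ⟨w * (16 * w ^ 2 + 9 * w + 1), by rw [sq, ← hk]; ring⟩
        exact (Nat.pow_dvd_pow_iff (by norm_num)).mp this
      obtain ⟨m, rfl⟩ := h4
      have hm : w * (16 * w ^ 2 + 9 * w + 1) = m * m := by nlinarith [hk]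
      have hcop : Nat.Coprime w (16 * w ^ 2 + 9 * w + 1) := by
        have h : 16 * w ^ 2 + 9 * w + 1 = 1 + w * (16 * w + 9) := by ring
        rw [h]
        exact (Nat.coprime_add_mul_left_right w 1 (16 * w + 9)).mpr (Nat.coprime_one_right w)
      obtain ⟨_, hb⟩ := aux_sq_split hcop ⟨m, hm⟩
      obtain ⟨j, hj⟩ := hb
      -- 16w²+9w+1 strictly between (4w+1)² and (4w+2)²
      rcases le_or_gt j (4 * w + 1) with hle | hgt
      · nlinarith
      · nlinarith
    · -- θ = 2u, u odd
      have h4 : (2 * u) * (4 * (2 * u) ^ 2 + 9 * (2 * u) + 4)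
          = 4 * (u * (8 * u ^ 2 + 9 * u + 2)) := by ring
      rw [h4] at hsq
      obtain ⟨k, hk⟩ := hsq
      have h2 : (2 : ℕ) ∣ k := by
        have : (2 : ℕ) ^ 2 ∣ k ^ 2 := ⟨u * (8 * u ^ 2 + 9 * u + 2), by rw [sq, ← hk]; ring⟩
        exact (Nat.pow_dvd_pow_iff (by norm_num)).mp this
      obtain ⟨m, rfl⟩ := h2
      have hm : u * (8 * u ^ 2 + 9 * u + 2) = m * m := by nlinarith [hk]
      have hcop : Nat.Coprime u (8 * u ^ 2 + 9 * u + 2) := by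
        have h : 8 * u ^ 2 + 9 * u + 2 = 2 + u * (8 * u + 9) := by ring
        rw [h]
        exact (Nat.coprime_add_mul_left_right u 2 (8 * u + 9)).mpr
          (Nat.coprime_two_right.mpr huo)
      obtain ⟨ha, hb⟩ := aux_sq_split hcop ⟨m, hm⟩
      obtain ⟨v, hv⟩ := ha
      obtain ⟨j, hj⟩ := hb
      -- u = v * v with v odd, so u ≡ 1 [MOD 8]
      have hvo : v % 2 = 1 := by
        rcases Nat.even_or_odd v with hv2 | hv2
        · exfalso
          obtain ⟨c, rfl⟩ := hv2
          have hu2 : u = 2 * (2 * (c * c)) := by rw [hv]; ring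
          rcases huo with ⟨d, hd⟩
          omega
        · rcases hv2 with ⟨c, rfl⟩; omega
      obtain ⟨w, rfl⟩ : ∃ w, v = 2 * w + 1 := ⟨v / 2, by omega⟩
      have hpar : ∃ c, w * w + w = 2 * c := by
        rcases Nat.even_or_odd w with ⟨c, hc⟩ | ⟨c, hc⟩
        · exact ⟨c * (2 * c + 1), by subst hc; ring⟩
        · exact ⟨(2 * c + 1) * (c + 1), by subst hc; ring⟩
      obtain ⟨c, hc⟩ := hpar
      -- j * j = 8u² + 9u + 2 with u = 8c + 1 + ... ≡ 1 mod 8, so j*j ≡ 3 mod 8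
      have hu8 : u % 8 = 1 := by
        have : u = 4 * (w * w + w) + 1 := by rw [hv]; ring
        omega
      have hj8 : (j * j) % 8 = 3 := by
        have h1 : j * j = 8 * u ^ 2 + 9 * u + 2 := hj.symm
        have h2 : u ^ 2 = u * u := sq u
        omega
      have hlt : j % 8 < 8 := Nat.mod_lt _ (by norm_num)
      have hmm : (j * j) % 8 = ((j % 8) * (j % 8)) % 8 := Nat.mul_mod j j 8
      interval_cases h : j % 8 <;> omega
  · -- θ odd
    have hcop : Nat.Coprime θ (4 * θ ^ 2 + 9 * θ + 4) := by
      have : 4 * θ ^ 2 + 9 * θ + 4 = 4 + θ * (4 * θ + 9) := by ring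
      rw [this]
      have h2 : Nat.Coprime θ 4 := by
        have h := Nat.coprime_two_right.mpr ho
        have := h.mul_right h
        norm_num at this
        exact this
      exact (Nat.coprime_add_mul_left_right θ 4 (4 * θ + 9)).mpr h2
    obtain ⟨_, hb⟩ := aux_sq_split hcop hsq
    obtain ⟨j, hj⟩ := hb
    -- 4θ²+9θ+4 strictly between (2θ+2)² and (2θ+3)²
    rcases le_or_gt j (2 * θ + 2) with hle | hgt
    · nlinarith
    · nlinarith

theorem stmt7 (θ : ℕ) (hθ : 0 < θ) (t : ℚ) (ht : t = ((θ : ℚ) ^ 2 + 1) / θ) :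
    Irrational (Real.sqrt (4 * (t : ℝ) + 9)) := by
  have hθQ : (θ : ℚ) ≠ 0 := Nat.cast_ne_zero.mpr hθ.ne'
  set q : ℚ := ((θ * (4 * θ ^ 2 + 9 * θ + 4) : ℕ) : ℚ) / ((θ : ℚ) ^ 2) with hq
  have hqr : 4 * (t : ℝ) + 9 = (q : ℝ) := by
    rw [ht, hq]
    push_cast
    field_simp
    ring
  rw [hqr]
  have hq0 : 0 ≤ q := by
    rw [hq]
    positivity
  rw [irrational_sqrt_ratCast_iff_of_nonneg hq0]
  intro hsq
  apply aux_key θ hθ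
  rw [← Rat.isSquare_natCast_iff]
  obtain ⟨r, hr⟩ := hsq
  refine ⟨(θ : ℚ) * r, ?_⟩
  have : ((θ * (4 * θ ^ 2 + 9 * θ + 4) : ℕ) : ℚ) = q * (θ : ℚ) ^ 2 := by
    rw [hq]
    field_simp
  rw [this, hr]
  ring
end

section
/- Let q > 1 be a real number, D ≥ 5 an integer, and α = 1 + q − q² − q^{D−1} + q^D + q^{D+1}. Then α ≥ 2 and α² − 4q^{D+1} > 0. -/
theorem stmt15 (q : ℝ) (hq : q > 1) (D : ℕ) (hD : 5 ≤ D)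
    (α : ℝ) (hα : α = 1 + q - q ^ 2 - q ^ (D - 1) + q ^ D + q ^ (D + 1)) :
    α ≥ 2 ∧ α ^ 2 - 4 * q ^ (D + 1) > 0 := by
  obtain ⟨k, rfl⟩ := Nat.exists_eq_add_of_le hD
  have hq0 : (0:ℝ) < q := by linarith
  set t := q ^ k with ht
  have htk : t ≥ 1 := one_le_pow₀ hq.le
  have e4 : q ^ (5 + k - 1) = q ^ 4 * t := by rw [show 5+k-1 = 4+k by omega, pow_add]
  have e5 : q ^ (5 + k) = q ^ 5 * t := by rw [pow_add]
  have e6 : q ^ (5 + k + 1) = q ^ 6 * t := by rw [show 5+k+1 = 6+k by omega, pow_add]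
  rw [e4, e5, e6] at hα
  rw [e6]
  have hq4 : q < q ^ 4 := by
    calc q < q ^ 2 := by nlinarith
    _ ≤ q ^ 4 := pow_le_pow_right₀ hq.le (by norm_num)
  have hqt : q ^ 4 * t > q := by nlinarith [mul_le_mul_of_nonneg_left htk (pow_pos hq0 4).le]
  have key : α > q ^ 6 * t + 1 := by
    have h := mul_pos (sub_pos.2 hq) (sub_pos.2 hqt)
    rw [hα]; nlinarith [h]
  have hpos : q ^ 6 * t > 1 := by nlinarith [one_lt_pow₀ hq (by norm_num : (6:ℕ) ≠ 0)]
  exact ⟨by linarith, by nlinarith [key, hpos]⟩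
end

section
/- Let q > 1 be a real number, D ≥ 5 an integer, and α = 1 + q − q² − q^{D−1} + q^D + q^{D+1}. Then (α − √(α² − 4q^{D+1}))/(2q^{D+3}) > q^{−2D−1}. -/
theorem stmt16 (q : ℝ) (hq : q > 1) (D : ℕ) (hD : 5 ≤ D)
    (α : ℝ) (hα : α = 1 + q - q ^ 2 - q ^ (D - 1) + q ^ D + q ^ (D + 1)) :
    (α - Real.sqrt (α ^ 2 - 4 * q ^ (D + 1))) / (2 * q ^ (D + 3)) >
      q ^ (-2 * (D : ℤ) - 1) := by
  have hq0 : (0:ℝ) < q := lt_trans one_pos hq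
  set m := q ^ D with hm
  have hmpos : 0 < m := pow_pos hq0 D
  have hm5 : q ^ 5 ≤ m := pow_le_pow_right₀ hq.le hD
  have hq2lt5 : q ^ 2 < q ^ 5 := pow_lt_pow_right₀ hq (by norm_num)
  have hmq2 : q ^ 2 < m := lt_of_lt_of_le hq2lt5 hm5
  have hq1lt2 : q < q ^ 2 := by nlinarith
  have hmq : q < m := lt_trans hq1lt2 hmq2
  have hD1 : q ^ (D - 1) = m / q := by
    rw [eq_div_iff hq0.ne']
    rw [← pow_succ]
    congr 1
    omega
  have hDp1 : q ^ (D + 1) = m * q := by rw [pow_succ]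
  have hDp3 : q ^ (D + 3) = m * q ^ 3 := by rw [pow_add]
  have hz : q ^ (-2 * (D : ℤ) - 1) = (m ^ 2 * q)⁻¹ := by
    rw [show -2 * (D : ℤ) - 1 = -((2 * D + 1 : ℕ) : ℤ) by push_cast; ring,
      zpow_neg, zpow_natCast, pow_add, pow_one, hm, ← pow_mul, mul_comm D 2]
  have hα' : α = 1 + q - q ^ 2 - m / q + m + m * q := by rw [hα, hD1, hDp1]
  have e2 : 2 * q ^ 2 / m < 2 := by rw [div_lt_iff₀ hmpos]; nlinarith
  have e1 : m / q ≤ m := div_le_self hmpos.le hq.le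
  have hq3 : q ^ 3 < m * q := by nlinarith
  have hy : 0 < α - 2 * q ^ 2 / m := by
    rw [hα']; nlinarith
  have hid : (α - 2 * q ^ 2 / m) ^ 2 - (α ^ 2 - 4 * (m * q)) =
      4 * (q * (m + 1) * (m - q) * (m - q ^ 2)) / m ^ 2 := by
    rw [hα']; field_simp; ring
  have hEpos : 0 < 4 * (q * (m + 1) * (m - q) * (m - q ^ 2)) / m ^ 2 := by
    apply div_pos _ (by positivity)
    have : 0 < q * (m + 1) * (m - q) * (m - q ^ 2) := by
      apply mul_pos (mul_pos (mul_pos hq0 (by linarith)) (by linarith)) (by linarith)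
    linarith
  have key : Real.sqrt (α ^ 2 - 4 * q ^ (D + 1)) < α - 2 * q ^ 2 / m := by
    rw [hDp1]
    exact (Real.sqrt_lt' hy).mpr (by linarith)
  rw [gt_iff_lt, hz, hDp3, lt_div_iff₀ (by positivity)]
  have hrw : (m ^ 2 * q)⁻¹ * (2 * (m * q ^ 3)) = 2 * q ^ 2 / m := by
    field_simp
  rw [hrw]
  linarith
end

section
/- Let q > 1 be a real number, D ≥ 5 an integer, and α = 1 + q − q² − q^{D−1} + q^D + q^{D+1}. Then both roots s of the quadratic q^{2D+6}·s² − α·q^{D+3}·s + q^{D+1} = 0, namely s = (α ± √(α² − 4q^{D+1}))/(2q^{D+3}), are strictly greater than q^{−2D−1}. -/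
set_option maxHeartbeats 1000000


theorem stmt18 (q : ℝ) (hq : q > 1) (D : ℕ) (hD : 5 ≤ D)
    (α : ℝ) (hα : α = 1 + q - q ^ 2 - q ^ (D - 1) + q ^ D + q ^ (D + 1)) :
    ∀ s : ℝ,
      (s = (α + Real.sqrt (α ^ 2 - 4 * q ^ (D + 1))) / (2 * q ^ (D + 3)) ∨
       s = (α - Real.sqrt (α ^ 2 - 4 * q ^ (D + 1))) / (2 * q ^ (D + 3))) →
      q ^ (2 * D + 6) * s ^ 2 - α * q ^ (D + 3) * s + q ^ (D + 1) = 0 ∧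
      s > q ^ (-2 * (D : ℤ) - 1) := by
  obtain ⟨k, rfl⟩ : ∃ k, D = k + 5 := ⟨D - 5, by omega⟩
  have hq0 : (0:ℝ) < q := by linarith
  set y : ℝ := q ^ (k+3) with hy
  have hy3 : q ^ 3 ≤ y := by
    rw [hy]; exact pow_le_pow_right₀ hq.le (by omega)
  have hq3 : (1:ℝ) < q ^ 3 := one_lt_pow₀ hq (by norm_num)
  have hy1 : 1 < y := lt_of_lt_of_le hq3 hy3
  have hy0 : 0 < y := by linarith
  have e2 : q ^ (k+6) = y * q ^ 3 := by rw [hy, ← pow_add]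
  have e4 : q ^ (2*k+11) = y^2 * q^5 := by
    rw [hy, ← pow_mul, ← pow_add, show (k+3)*2+5 = 2*k+11 from by ring]
  have e5 : q ^ (k+5+3) = y * q^5 := by rw [hy, ← pow_add]
  have hα' : α = 1 + q - q ^ 2 - y*q + y*q^2 + y*q^3 := by
    rw [hα, show k+5-1 = k+4 from rfl,
      show k+5 = (k+3)+2 from by ring, show (k+3)+2+1 = (k+3)+3 from by ring,
      show k+4 = (k+3)+1 from by ring, pow_add, pow_add, pow_add, ← hy]
    ring
  have hqy1 : 1 < q * y := by nlinarith
  have hΔ : 0 < α^2 - 4*q^(k+6) := by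
    have hfac : α^2 - 4*q^(k+6)
        = ((q^2+q-1)^2*(q*y) - (q^2-q-1)^2) * (q*y - 1) := by
      rw [hα', e2]; ring
    have h2 : (q^2-q-1)^2 < (q^2+q-1)^2*(q*y) := by
      nlinarith [sq_nonneg (q^2+q-1), sq_nonneg (q^2-q-1)]
    rw [hfac]
    exact mul_pos (by linarith) (by linarith)
  set r : ℝ := Real.sqrt (α ^ 2 - 4 * q ^ (k + 5 + 1)) with hr
  have hr0 : 0 ≤ r := Real.sqrt_nonneg _
  have hr2 : r^2 = α^2 - 4*q^(k+6) := Real.sq_sqrt hΔ.le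
  have hα2 : 2 < α := by
    nlinarith [mul_pos (mul_pos hq0 hy0) (show (0:ℝ) < q^2-1 by nlinarith),
      mul_pos (show (0:ℝ) < q^2 by positivity) (show (0:ℝ) < y-1 by linarith)]
  have hB0 : 0 < α - 2/y := by
    have h2y : 2/y < 2 := by rw [div_lt_iff₀ hy0]; nlinarith
    linarith
  have hP : 0 < (y-1)*(q*y-1)*(q^2*y+1) :=
    mul_pos (mul_pos (by linarith) (by linarith)) (by positivity)
  have hBΔ : α^2 - 4*q^(k+6) < (α - 2/y)^2 := by
    have hexp : (α - 2/y)^2 - (α^2 - 4*q^(k+6))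
        = ((y-1)*(q*y-1)*(q^2*y+1)) * (4/y^2) := by
      rw [e2, hα']; field_simp; ring
    nlinarith [mul_pos hP (show (0:ℝ) < 4/y^2 by positivity)]
  have hrB : r < α - 2/y := by
    rw [hr]
    exact (Real.sqrt_lt' hB0).mpr hBΔ
  have ht : (q:ℝ) ^ (-2*((k+5:ℕ):ℤ)-1) = (q^(2*k+11) : ℝ)⁻¹ := by
    rw [show (-2*((k+5:ℕ):ℤ)-1) = -((2*k+11 : ℕ) : ℤ) from by push_cast; ring,
      zpow_neg, zpow_natCast]
  have hm : (q^(2*k+11) : ℝ)⁻¹ < (α - r)/(2*q^(k+5+3)) := by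
    rw [inv_eq_one_div, div_lt_div_iff₀ (by positivity) (by positivity)]
    calc 1*(2*q^(k+5+3)) = 2/y * (y^2*q^5) := by rw [e5]; field_simp
      _ < (α - r)*(y^2*q^5) := by
          apply mul_lt_mul_of_pos_right (by linarith) (by positivity)
      _ = (α - r)*q^(2*k+11) := by rw [e4]
  intro s hs
  have hc2 : q ^ (2*(k+5)+6) = (q^(k+5+3))^2 := by
    rw [show 2*(k+5)+6 = (k+5+3)*2 from by ring, pow_mul]
  have hcpos : (0:ℝ) < q^(k+5+3) := by positivity
  rcases hs with rfl | rfl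
  · constructor
    · rw [hc2]
      set s : ℝ := (α + r) / (2 * q ^ (k + 5 + 3)) with hsdef
      have hmul : s * (2 * q ^ (k + 5 + 3)) = α + r := by
        rw [hsdef]; exact div_mul_cancel₀ _ (by positivity)
      linear_combination ((s*(2*q^(k+5+3)) - α + r)/4) * hmul + (1/4) * hr2
    · rw [ht]
      have hstep : (α - r)/(2*q^(k+5+3)) ≤ (α + r)/(2*q^(k+5+3)) := by
        gcongr
        linarith
      linarith
  · constructor
    · rw [hc2]
      set s : ℝ := (α - r) / (2 * q ^ (k + 5 + 3)) with hsdef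
      have hmul : s * (2 * q ^ (k + 5 + 3)) = α - r := by
        rw [hsdef]; exact div_mul_cancel₀ _ (by positivity)
      linear_combination ((s*(2*q^(k+5+3)) - α - r)/4) * hmul + (1/4) * hr2
    · rw [ht]
      exact hm
end
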